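/- Let ν > 0 be a real number, k ∈ ℕ, and 0 ≤ j ≤ k. Then ∑_{i=0}^{k−j} C(k,i)² · (i!/(ν)_i) · C(k−i, j) = C(k,j) · (ν+k−j)_k/(ν)_k, where C(·,·) denotes binomial coefficients. -/

import Mathlib

/-!
Since `(ν)_k = (ν)_i (ν+i)_{k-i}` and `C(k,i) C(k-i,j) = C(k,j) C(k-j,i)`, the sum equals
`C(k,j)/(ν)_k · ∑_i k(k-1)⋯(k-i+1) C(m,i) (ν+i)_{k-i}` with `m = k - j`. The last sum is the
Chu–Vandermonde identity `(ν+m)_k`, proved by induction on `m` from Pascal's rule and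
`(a+1)_{n+1} = (a)_{n+1} + (n+1)(a+1)_n`.
-/

open Finset

/-- The Pochhammer symbol `(a)_n = a(a+1)⋯(a+n-1)` for a real number `a`. -/
noncomputable def poch (a : ℝ) (n : ℕ) : ℝ := ∏ i ∈ Finset.range n, (a + i)

lemma poch_succ_right (a : ℝ) (n : ℕ) : poch a (n + 1) = poch a n * (a + n) :=
  prod_range_succ _ _

lemma poch_add (a : ℝ) (m n : ℕ) : poch a (m + n) = poch a m * poch (a + m) n := by
  simp only [poch, prod_range_add, Nat.cast_add, add_assoc]

lemma poch_pos {a : ℝ} (ha : 0 < a) (n : ℕ) : 0 < poch a n :=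
  prod_pos fun _ _ => by positivity

lemma poch_succ_left (a : ℝ) (n : ℕ) : poch a (n + 1) = a * poch (a + 1) n := by
  rw [add_comm, poch_add]
  simp [poch]

lemma poch_add_one_succ (a : ℝ) (n : ℕ) :
    poch (a + 1) (n + 1) = poch a (n + 1) + (n + 1) * poch (a + 1) n := by
  rw [poch_succ_right, poch_succ_left a]
  ring

theorem sum_descFactorial_mul_choose_mul_poch (k m : ℕ) (ν : ℝ) :
    ∑ i ∈ range (m + 1), (k.descFactorial i : ℝ) * m.choose i * poch (ν + i) (k - i) =
      poch (ν + m) k := by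
  induction m generalizing k ν with
  | zero => simp
  | succ m ih =>
    cases k with
    | zero => simp [sum_range_succ', poch]
    | succ k =>
      have hshift : ∑ i ∈ range (m + 1), ((k + 1).descFactorial (i + 1) : ℝ) * m.choose i *
          poch (ν + (i + 1 : ℕ)) (k + 1 - (i + 1)) = (k + 1) * poch (ν + 1 + m) k := by
        rw [← ih k (ν + 1), mul_sum]
        refine sum_congr rfl fun i _ => ?_
        rw [Nat.succ_descFactorial_succ, Nat.add_sub_add_right]
        push_cast [← add_assoc, add_right_comm ν (i : ℝ) 1]
        ring
      have hsame : ∑ i ∈ range (m + 1), ((k + 1).descFactorial (i + 1) : ℝ) * m.choose (i + 1) *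
          poch (ν + (i + 1 : ℕ)) (k + 1 - (i + 1)) + poch ν (k + 1) = poch (ν + m) (k + 1) := by
        rw [← ih (k + 1) ν, sum_range_succ _ m, sum_range_succ' _ m]
        simp
      calc _ = ∑ i ∈ range (m + 1), ((k + 1).descFactorial (i + 1) : ℝ) *
              (m.choose i + m.choose (i + 1)) * poch (ν + (i + 1 : ℕ)) (k + 1 - (i + 1)) +
              poch ν (k + 1) := by
            simp [sum_range_succ' _ (m + 1), Nat.choose_succ_succ']
        _ = (k + 1) * poch (ν + 1 + m) k + poch (ν + m) (k + 1) := by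
            rw [← hshift, ← hsame]
            simp only [mul_add, add_mul, sum_add_distrib]
            ring
        _ = poch (ν + (m + 1 : ℕ)) (k + 1) := by
            rw [Nat.cast_succ, ← add_assoc, poch_add_one_succ, add_right_comm]
            ring

theorem Nat.choose_mul_choose_sub_comm {k i j : ℕ} (h : i + j ≤ k) :
    k.choose i * (k - i).choose j = k.choose j * (k - j).choose i := by
  have := Nat.choose_mul (n := k) (k := k - i) (s := j) (by omega)
  rwa [Nat.choose_symm (by omega), Nat.sub_right_comm, Nat.choose_symm (by omega)] at this

lemma choose_sq_mul_factorial_div_poch_mul_choose {ν : ℝ} {k i j : ℕ} (hν : poch ν k ≠ 0)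
    (h : i + j ≤ k) :
    (k.choose i : ℝ) ^ 2 * ((i.factorial : ℝ) / poch ν i) * ((k - i).choose j : ℝ) =
      k.choose j / poch ν k * (k.descFactorial i * (k - j).choose i * poch (ν + i) (k - i)) := by
  have hchoose : (k.choose i : ℝ) * (k - i).choose j = k.choose j * (k - j).choose i := by
    exact_mod_cast Nat.choose_mul_choose_sub_comm h
  have hsplit : poch ν k = poch ν i * poch (ν + i) (k - i) := by
    rw [← poch_add, Nat.add_sub_of_le (le_of_add_le_left h)]
  rw [hsplit] at hν ⊢
  obtain ⟨hi, hki⟩ := mul_ne_zero_iff.mp hν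
  rw [Nat.descFactorial_eq_factorial_mul_choose, Nat.cast_mul]
  field_simp
  linear_combination (k.choose i : ℝ) * hchoose

/-- `∑_{i=0}^{k−j} C(k,i)²·(i!/(ν)_i)·C(k−i,j) = C(k,j)·(ν+k−j)_k/(ν)_k`. -/
theorem coefficient_identity (ν : ℝ) (hν : 0 < ν) (k j : ℕ) (hj : j ≤ k) :
    ∑ i ∈ Finset.range (k - j + 1),
        (k.choose i : ℝ) ^ 2 * ((Nat.factorial i : ℝ) / poch ν i) * ((k - i).choose j : ℝ) =
      (k.choose j : ℝ) * poch (ν + (k : ℝ) - (j : ℝ)) k / poch ν k := by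
  have hsummand : ∀ i ∈ range (k - j + 1), (k.choose i : ℝ) ^ 2 *
      ((i.factorial : ℝ) / poch ν i) * ((k - i).choose j : ℝ) = k.choose j / poch ν k *
        (k.descFactorial i * (k - j).choose i * poch (ν + i) (k - i)) := fun i hi =>
    choose_sq_mul_factorial_div_poch_mul_choose (poch_pos hν k).ne'
      (by have := mem_range.mp hi; omega)
  rw [sum_congr rfl hsummand, ← mul_sum, sum_descFactorial_mul_choose_mul_poch, Nat.cast_sub hj,
    ← add_sub_assoc, div_mul_eq_mul_div]
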